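/- arXiv:2209.02769 — 2 statements merged into one kernel-verified Lean document; each statement's English description precedes it below -/
import Mathlib

section
/- Every topological measure space is uniformisable: the family {N(ε) : ε > 0}, where N(ε) := {(x,y) ∈ X × X : there is an open connected set U with x,y ∈ U and m(U) < ε}, is a base for a uniformity on X whose induced topology coincides with τ. -/
open MeasureTheory
open Uniformity
open scoped SetRel

def IsTMS {X : Type*} [TopologicalSpace X] [MeasurableSpace X] (m : Measure X) : Prop :=
  (∀ U : Set X, IsOpen U → MeasurableSet U) ∧
  (∀ x : X, ∀ ε : ENNReal, 0 < ε →
    ∃ U : Set X, IsOpen U ∧ IsConnected U ∧ x ∈ U ∧ m U < ε) ∧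
  (∀ G : Set X, IsOpen G → ∀ x ∈ G, ∃ ε : ENNReal, 0 < ε ∧
    ∀ U : Set X, IsOpen U → IsConnected U → x ∈ U → m U < ε → U ⊆ G)

/-- The entourage `N(ε)`: pairs of points lying in a common open connected set of
measure `< ε`. -/
def tmsEnt {X : Type*} [TopologicalSpace X] [MeasurableSpace X] (m : Measure X)
    (ε : ENNReal) : Set (X × X) :=
  {p : X × X | ∃ U : Set X, IsOpen U ∧ IsConnected U ∧ p.1 ∈ U ∧ p.2 ∈ U ∧ m U < ε}

/-- Every tms is uniformisable: the family `{N(ε) : ε > 0}` is a base of a uniformity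
on `X` whose induced topology coincides with the original topology. -/
theorem tms_uniformisable {X : Type*} [t : TopologicalSpace X] [MeasurableSpace X]
    (m : Measure X) (h : IsTMS m) :
    ∃ 𝒰 : UniformSpace X, 𝒰.toTopologicalSpace = t ∧
      𝒰.uniformity.HasBasis (fun ε : ENNReal => 0 < ε) (tmsEnt m) := by
  obtain ⟨hmeas, hsmall, hloc⟩ := h
  set F : Filter (X × X) := ⨅ (ε : ENNReal) (_ : 0 < ε), Filter.principal (tmsEnt m ε) with hF
  have hmono : ∀ {ε ε' : ENNReal}, ε ≤ ε' → tmsEnt m ε ⊆ tmsEnt m ε' := by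
    rintro ε ε' hle ⟨x, y⟩ ⟨U, hU, hUc, hx, hy, hm⟩
    exact ⟨U, hU, hUc, hx, hy, lt_of_lt_of_le hm hle⟩
  have hB : F.HasBasis (fun ε : ENNReal => 0 < ε) (tmsEnt m) := by
    refine Filter.hasBasis_biInf_principal' (fun ε hε ε' hε' => ?_) ⟨1, one_pos⟩
    exact ⟨min ε ε', lt_min hε hε', hmono (min_le_left _ _), hmono (min_le_right _ _)⟩
  -- diagonal
  have hrefl : ∀ ε : ENNReal, 0 < ε → ∀ x : X, (x, x) ∈ tmsEnt m ε := by
    intro ε hε x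
    obtain ⟨U, hU, hUc, hx, hm⟩ := hsmall x ε hε
    exact ⟨U, hU, hUc, hx, hx, hm⟩
  -- composition
  have hcomp : ∀ ε : ENNReal, 0 < ε →
      tmsEnt m (ε / 2) ○ tmsEnt m (ε / 2) ⊆ tmsEnt m ε := by
    rintro ε hε ⟨x, z⟩ ⟨y, ⟨U, hU, hUc, hx, hyU, hmU⟩, ⟨V, hV, hVc, hyV, hz, hmV⟩⟩
    refine ⟨U ∪ V, hU.union hV, hUc.union ⟨y, hyU, hyV⟩ hVc, Or.inl hx, Or.inr hz, ?_⟩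
    calc m (U ∪ V) ≤ m U + m V := measure_union_le U V
      _ < ε / 2 + ε / 2 := ENNReal.add_lt_add hmU hmV
      _ = ε := ENNReal.add_halves ε
  have hhalf : ∀ ε : ENNReal, 0 < ε → (0 : ENNReal) < ε / 2 := by
    intro ε hε
    exact ENNReal.div_pos hε.ne' (by norm_num)
  set core : UniformSpace.Core X :=
    { uniformity := F
      refl := hB.ge_iff.mpr fun ε hε => by rintro ⟨x, y⟩ (rfl : x = y); exact hrefl ε hε x
      symm := (hB.tendsto_iff hB).mpr fun ε hε =>
        ⟨ε, hε, by rintro ⟨x, y⟩ ⟨U, hU, hUc, hx, hy, hm⟩; exact ⟨U, hU, hUc, hy, hx, hm⟩⟩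
      comp := by
        intro s hs
        obtain ⟨ε, hε, hsub⟩ := hB.mem_iff.1 hs
        exact Filter.mem_of_superset (Filter.mem_lift' (hB.mem_of_mem (hhalf ε hε)))
          ((hcomp ε hε).trans hsub) } with hcore
  -- the topology induced by the core equals t
  have hball : ∀ x : X, ∀ ε : ENNReal, Prod.mk x ⁻¹' tmsEnt m ε =
      ⋃ U ∈ {U : Set X | IsOpen U ∧ IsConnected U ∧ x ∈ U ∧ m U < ε}, U := by
    intro x ε
    ext y
    simp only [Set.mem_preimage, Set.mem_iUnion, Set.mem_setOf_eq, tmsEnt]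
    constructor
    · rintro ⟨U, hU, hUc, hx, hy, hm⟩; exact ⟨U, ⟨hU, hUc, hx, hm⟩, hy⟩
    · rintro ⟨U, ⟨hU, hUc, hx, hm⟩, hy⟩; exact ⟨U, hU, hUc, hx, hy, hm⟩
  have htop : t = core.toTopologicalSpace := by
    refine TopologicalSpace.ext_nhds fun x => ?_
    rw [core.nhds_toTopologicalSpace x]
    have hBn : (Filter.comap (Prod.mk x) F).HasBasis (fun ε : ENNReal => 0 < ε)
        (fun ε => Prod.mk x ⁻¹' tmsEnt m ε) := hB.comap _
    refine le_antisymm ?_ ?_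
    · refine hBn.ge_iff.2 fun ε hε => ?_
      obtain ⟨U, hU, hUc, hx, hm⟩ := hsmall x ε hε
      refine mem_nhds_iff.2 ⟨Prod.mk x ⁻¹' tmsEnt m ε, subset_rfl, ?_, ⟨U, hU, hUc, hx, hx, hm⟩⟩
      rw [hball]
      exact isOpen_biUnion fun U hU => hU.1
    · intro s hs
      obtain ⟨G, hGs, hG, hxG⟩ := mem_nhds_iff.1 hs
      obtain ⟨ε, hε, hεG⟩ := hloc G hG x hxG
      refine hBn.mem_of_superset hε (subset_trans ?_ hGs)
      rintro y ⟨U, hU, hUc, hx, hy, hm⟩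
      exact hεG U hU hUc hx hm hy
  exact ⟨UniformSpace.ofCoreEq core t htop, rfl, hB⟩
end

section
/- Let (X, τ, M, m) be a topological measure space such that for every pair of points x, y ∈ X there exists an open connected set U containing both with m(U) < ∞. Then d(x,y) := inf{ m(U) : x, y ∈ U, U open connected } defines a pseudometric on X, and the topology induced by d equals τ. -/
open MeasureTheory

/-- `d(x,y) := inf { m U : x, y ∈ U, U open connected }` (as a real number). -/
noncomputable def tmsDist {X : Type*} [TopologicalSpace X] [MeasurableSpace X]
    (m : Measure X) (x y : X) : ℝ :=
  (sInf {r : ENNReal | ∃ U : Set X, IsOpen U ∧ IsConnected U ∧ x ∈ U ∧ y ∈ U ∧ m U = r}).toReal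

section aux
variable {X : Type*} [TopologicalSpace X] [MeasurableSpace X] (m : Measure X)

def tmsSet (x y : X) : Set ENNReal :=
  {r : ENNReal | ∃ U : Set X, IsOpen U ∧ IsConnected U ∧ x ∈ U ∧ y ∈ U ∧ m U = r}

noncomputable def tmsED (x y : X) : ENNReal := sInf (tmsSet m x y)

lemma tmsSet_comm (x y : X) : tmsSet m x y = tmsSet m y x := by
  ext r; constructor <;> rintro ⟨U, h1, h2, h3, h4, h5⟩ <;> exact ⟨U, h1, h2, h4, h3, h5⟩

lemma tmsDist_eq (x y : X) : tmsDist m x y = (tmsED m x y).toReal := rfl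

lemma tmsED_le {x y : X} {U : Set X} (hU : IsOpen U) (hc : IsConnected U)
    (hx : x ∈ U) (hy : y ∈ U) : tmsED m x y ≤ m U :=
  sInf_le ⟨U, hU, hc, hx, hy, rfl⟩

lemma tmsED_self (h : IsTMS m) (x : X) : tmsED m x x = 0 := by
  refine le_antisymm (ENNReal.le_of_forall_pos_le_add fun ε hε _ => ?_) zero_le
  obtain ⟨U, hU, hc, hx, hm⟩ := h.2.1 x ε (by exact_mod_cast hε)
  calc tmsED m x x ≤ m U := tmsED_le m hU hc hx hx
    _ ≤ 0 + ε := by simpa using hm.le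

lemma tmsED_comm (x y : X) : tmsED m x y = tmsED m y x := by
  unfold tmsED; rw [tmsSet_comm]

lemma tmsED_lt_top (hfin : ∀ x y : X, ∃ U : Set X,
    IsOpen U ∧ IsConnected U ∧ x ∈ U ∧ y ∈ U ∧ m U < ⊤) (x y : X) : tmsED m x y < ⊤ := by
  obtain ⟨U, hU, hc, hx, hy, hm⟩ := hfin x y
  exact lt_of_le_of_lt (tmsED_le m hU hc hx hy) hm

lemma tmsED_triangle (hfin : ∀ x y : X, ∃ U : Set X,
    IsOpen U ∧ IsConnected U ∧ x ∈ U ∧ y ∈ U ∧ m U < ⊤) (x y z : X) :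
    tmsED m x z ≤ tmsED m x y + tmsED m y z := by
  refine ENNReal.le_of_forall_pos_le_add fun ε hε hb => ?_
  have hε2 : (0 : ENNReal) < ε / 2 :=
    ENNReal.div_pos (by exact_mod_cast hε.ne') (by norm_num)
  have h1 : tmsED m x y < tmsED m x y + ε / 2 :=
    ENNReal.lt_add_right (tmsED_lt_top m hfin x y).ne hε2.ne'
  have h2 : tmsED m y z < tmsED m y z + ε / 2 :=
    ENNReal.lt_add_right (tmsED_lt_top m hfin y z).ne hε2.ne'
  obtain ⟨a, ⟨U, hU, hUc, hxU, hyU, rfl⟩, ha⟩ := sInf_lt_iff.mp h1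
  obtain ⟨b, ⟨V, hV, hVc, hyV, hzV, rfl⟩, hbb⟩ := sInf_lt_iff.mp h2
  have hconn : IsConnected (U ∪ V) := hUc.union ⟨y, hyU, hyV⟩ hVc
  calc tmsED m x z ≤ m (U ∪ V) := tmsED_le m (hU.union hV) hconn (Or.inl hxU) (Or.inr hzV)
    _ ≤ m U + m V := measure_union_le U V
    _ ≤ (tmsED m x y + ↑ε / 2) + (tmsED m y z + ↑ε / 2) := add_le_add ha.le hbb.le
    _ = tmsED m x y + tmsED m y z + (↑ε / 2 + ↑ε / 2) := by ring
    _ = tmsED m x y + tmsED m y z + ↑ε := by rw [ENNReal.add_halves]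

end aux

/-- A tms in which any two points lie in a common open connected set of finite measure is
pseudometrisable: `tmsDist` is a pseudometric inducing the original topology. -/
theorem tms_pseudometrisable {X : Type*} [t : TopologicalSpace X] [MeasurableSpace X]
    (m : Measure X) (h : IsTMS m)
    (hfin : ∀ x y : X, ∃ U : Set X, IsOpen U ∧ IsConnected U ∧ x ∈ U ∧ y ∈ U ∧ m U < ⊤) :
    ∃ pm : PseudoMetricSpace X,
      (∀ x y : X, pm.dist x y = tmsDist m x y) ∧
      pm.toUniformSpace.toTopologicalSpace = t := by
  have hnetop : ∀ x y : X, tmsED m x y ≠ ⊤ := fun x y => (tmsED_lt_top m hfin x y).ne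
  have hself : ∀ x : X, tmsDist m x x = 0 := by
    intro x; rw [tmsDist_eq, tmsED_self m h]; simp
  have hcomm : ∀ x y : X, tmsDist m x y = tmsDist m y x := by
    intro x y; rw [tmsDist_eq, tmsDist_eq, tmsED_comm]
  have htri : ∀ x y z : X, tmsDist m x z ≤ tmsDist m x y + tmsDist m y z := by
    intro x y z
    rw [tmsDist_eq, tmsDist_eq, tmsDist_eq, ← ENNReal.toReal_add (hnetop x y) (hnetop y z)]
    exact ENNReal.toReal_mono (by simp [ENNReal.add_ne_top, hnetop]) (tmsED_triangle m hfin x y z)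
  have H : ∀ s : Set X, IsOpen s ↔ ∀ x ∈ s, ∃ ε > 0, ∀ y, tmsDist m x y < ε → y ∈ s := by
    intro s
    constructor
    · intro hs x hx
      obtain ⟨ε, hε, hball⟩ := h.2.2 s hs x hx
      set ε' : ENNReal := min ε 1 with hε'def
      have hε'0 : 0 < ε' := lt_min hε one_pos
      have hε'top : ε' ≠ ⊤ := ne_top_of_le_ne_top (by simp) (min_le_right _ _)
      refine ⟨ε'.toReal, ENNReal.toReal_pos hε'0.ne' hε'top, fun y hy => ?_⟩
      have hlt : tmsED m x y < ε' := by
        rw [tmsDist_eq] at hy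
        exact (ENNReal.toReal_lt_toReal (hnetop x y) hε'top).mp hy
      obtain ⟨a, ⟨U, hU, hUc, hxU, hyU, rfl⟩, ha⟩ := sInf_lt_iff.mp hlt
      exact hball U hU hUc hxU (lt_of_lt_of_le ha (min_le_left _ _)) hyU
    · intro hs
      rw [isOpen_iff_forall_mem_open]
      intro x hx
      obtain ⟨ε, hε, hball⟩ := hs x hx
      obtain ⟨V, hV, hVc, hxV, hmV⟩ := h.2.1 x (ENNReal.ofReal ε) (ENNReal.ofReal_pos.mpr hε)
      refine ⟨V, fun y hy => hball y ?_, hV, hxV⟩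
      have h2 : tmsED m x y < ENNReal.ofReal ε :=
        lt_of_le_of_lt (tmsED_le m hV hVc hxV hy) hmV
      rw [tmsDist_eq]
      exact (ENNReal.lt_ofReal_iff_toReal_lt (hnetop x y)).mp h2
  exact ⟨PseudoMetricSpace.ofDistTopology (tmsDist m) hself hcomm htri H, fun _ _ => rfl, rfl⟩
end
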